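/- The partial derivative automaton A_pd(α) = (PD(α), Σ, δ_pd, α, F), where δ_pd(q,σ) = ∂_σ(q) and F = {q ∈ PD(α) : ε ∈ L(q)}, accepts exactly the language L(α) (Mirkin–Antimirov theorem). -/
import Mathlib


open RegularExpression
open scoped Classical

variable {σ : Type*}

/-- `S ⊙ β`: append `β` on the right to every element of `S`, with `S ⊙ ∅ = ∅`. -/
noncomputable def odot (S : Finset (RegularExpression σ)) (β : RegularExpression σ) :
    Finset (RegularExpression σ) :=
  if β = zero then ∅ else S.image (fun γ => comp γ β)

/-- Antimirov's partial derivative of a regular expression w.r.t. a letter. -/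
noncomputable def pd (a : σ) : RegularExpression σ → Finset (RegularExpression σ)
  | zero => ∅
  | epsilon => ∅
  | char b => if b = a then {epsilon} else ∅
  | plus P Q => pd a P ∪ pd a Q
  | comp P Q =>
      if [] ∈ P.matches' then odot (pd a P) Q ∪ pd a Q else odot (pd a P) Q
  | RegularExpression.star P => odot (pd a P) (RegularExpression.star P)

/-- Partial derivative of a finite set of regular expressions w.r.t. a letter. -/
noncomputable def pdSet (a : σ) (S : Finset (RegularExpression σ)) :
    Finset (RegularExpression σ) :=
  S.biUnion (pd a)

/-- Partial derivatives w.r.t. a word: `∂_ε(α) = {α}`, `∂_{wσ}(α) = ∂_σ(∂_w(α))`. -/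
noncomputable def pdWord (α : RegularExpression σ) (w : List σ) :
    Finset (RegularExpression σ) :=
  w.foldl (fun S a => pdSet a S) {α}

/-- The set of all partial derivatives of `α`. -/
def PD (α : RegularExpression σ) : Set (RegularExpression σ) :=
  {β | ∃ w : List σ, β ∈ pdWord α w}

/-- Alphabetic size: number of letter occurrences. -/
def alph : RegularExpression σ → ℕ
  | zero => 0
  | epsilon => 0
  | char _ => 1
  | plus P Q => alph P + alph Q
  | comp P Q => alph P + alph Q
  | RegularExpression.star P => alph P

/-- The language of a finite set of regular expressions. -/
def langOf (S : Finset (RegularExpression σ)) : Language σ :=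
  {w | ∃ β ∈ S, w ∈ β.matches'}

/-- The partial derivative automaton of `α`: states are the partial derivatives
`PD(α)`, the initial state is `α`, transitions are given by `∂_σ`, and final
states are those whose language contains `ε`. -/
noncomputable def pdNFA (α : RegularExpression σ) : NFA σ (PD α) where
  step := fun q a => {p | (p : RegularExpression σ) ∈ pd a (q : RegularExpression σ)}
  start := {q | (q : RegularExpression σ) = α}
  accept := {q | [] ∈ (q : RegularExpression σ).matches'}


open scoped Computability

private lemma mem_langOf {S : Finset (RegularExpression σ)} {v : List σ} :
    v ∈ langOf S ↔ ∃ β ∈ S, v ∈ β.matches' := Iff.rfl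

private lemma cons_mem_kstar {l : Language σ} {a : σ} {v : List σ} :
    a :: v ∈ l∗ ↔ ∃ u w, a :: u ∈ l ∧ w ∈ l∗ ∧ u ++ w = v := by
  constructor
  · intro h
    rw [Language.mem_kstar_iff_exists_nonempty] at h
    obtain ⟨S, hS, hmem⟩ := h
    match S, hS, hmem with
    | [], hS, _ => simp at hS
    | [] :: S', _, hmem => exact absurd rfl (hmem [] (by simp)).2
    | (b :: u) :: S', hS, hmem =>
      simp only [List.flatten_cons, List.cons_append, List.cons.injEq] at hS
      obtain ⟨rfl, rfl⟩ := hS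
      exact ⟨u, S'.flatten, (hmem _ (by simp)).1,
        ⟨S', rfl, fun y hy => (hmem y (by simp [hy])).1⟩, rfl⟩
  · rintro ⟨u, w, hu, hw, rfl⟩
    rw [Language.mem_kstar] at hw ⊢
    obtain ⟨L, rfl, hL⟩ := hw
    refine ⟨(a :: u) :: L, by simp, ?_⟩
    intro y hy
    rcases List.mem_cons.1 hy with rfl | hy'
    · exact hu
    · exact hL y hy'

private lemma mem_langOf_union {S T : Finset (RegularExpression σ)} {v : List σ} :
    v ∈ langOf (S ∪ T) ↔ v ∈ langOf S ∨ v ∈ langOf T := by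
  simp only [mem_langOf, Finset.mem_union, or_and_right, exists_or]

private lemma mem_langOf_odot {S : Finset (RegularExpression σ)}
    {Q : RegularExpression σ} {v : List σ} :
    v ∈ langOf (odot S Q) ↔ ∃ u w, u ∈ langOf S ∧ w ∈ Q.matches' ∧ u ++ w = v := by
  unfold odot
  split
  · next h =>
    subst h
    refine iff_of_false (fun hmem => ?_) (fun hmem => ?_)
    · obtain ⟨β, hβ, -⟩ := mem_langOf.1 hmem
      exact Finset.notMem_empty β hβ
    · obtain ⟨u, w, -, hw, -⟩ := hmem
      rw [zero_def, matches'_zero] at hw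
      exact Language.notMem_zero w hw
  · rw [mem_langOf]
    simp only [Finset.mem_image]
    constructor
    · rintro ⟨β, ⟨γ, hγ, rfl⟩, hv⟩
      rw [comp_def, matches'_mul, Language.mem_mul] at hv
      obtain ⟨u, hu, w, hw, rfl⟩ := hv
      exact ⟨u, w, mem_langOf.2 ⟨γ, hγ, hu⟩, hw, rfl⟩
    · rintro ⟨u, w, hu, hw, rfl⟩
      obtain ⟨γ, hγ, hu'⟩ := mem_langOf.1 hu
      exact ⟨comp γ Q, ⟨γ, hγ, rfl⟩, by
        rw [comp_def, matches'_mul, Language.mem_mul]; exact ⟨u, hu', w, hw, rfl⟩⟩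

private lemma mem_langOf_pd (a : σ) (β : RegularExpression σ) (v : List σ) :
    v ∈ langOf (pd a β) ↔ a :: v ∈ β.matches' := by
  induction β generalizing v with
  | zero =>
    refine iff_of_false (fun hmem => ?_) (fun hmem => ?_)
    · obtain ⟨β, hβ, -⟩ := mem_langOf.1 hmem
      exact Finset.notMem_empty β hβ
    · rw [zero_def, matches'_zero] at hmem
      exact Language.notMem_zero _ hmem
  | epsilon =>
    refine iff_of_false (fun hmem => ?_) (fun hmem => ?_)
    · obtain ⟨β, hβ, -⟩ := mem_langOf.1 hmem
      exact Finset.notMem_empty β hβ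
    · rw [one_def, matches'_epsilon, Language.mem_one] at hmem
      exact List.cons_ne_nil a v hmem
  | char b =>
    rw [show pd a (char b) = if b = a then {epsilon} else ∅ from rfl, matches'_char]
    by_cases h : b = a
    · subst h
      rw [if_pos rfl]
      constructor
      · intro hmem
        obtain ⟨β, hβ, hv⟩ := mem_langOf.1 hmem
        rw [Finset.mem_singleton] at hβ
        subst hβ
        rw [one_def, matches'_epsilon, Language.mem_one] at hv
        subst hv
        rfl
      · intro hmem
        have h2 : b :: v = [b] := hmem
        have h3 : v = [] := by simpa using h2
        subst h3
        exact mem_langOf.2 ⟨epsilon, Finset.mem_singleton_self _,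
          by rw [one_def, matches'_epsilon, Language.mem_one]⟩
    · rw [if_neg h]
      refine iff_of_false (fun hmem => ?_) (fun hmem => ?_)
      · obtain ⟨β, hβ, -⟩ := mem_langOf.1 hmem
        exact Finset.notMem_empty β hβ
      · have h2 : a :: v = [b] := hmem
        simp only [List.cons.injEq] at h2
        exact h h2.1.symm
  | plus P Q ihP ihQ =>
    rw [show pd a (plus P Q) = pd a P ∪ pd a Q from rfl, mem_langOf_union, ihP, ihQ,
      plus_def, matches'_add]
    rfl
  | comp P Q ihP ihQ =>
    rw [show (comp P Q).matches' = P.matches' * Q.matches' by rw [comp_def, matches'_mul],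
      Language.mem_mul]
    rw [show pd a (comp P Q) =
      (if [] ∈ P.matches' then odot (pd a P) Q ∪ pd a Q else odot (pd a P) Q) from rfl]
    split
    · next h =>
      rw [mem_langOf_union, ihQ, mem_langOf_odot]
      constructor
      · rintro (⟨u, w, hu, hw, rfl⟩ | hv)
        · exact ⟨a :: u, (ihP u).1 hu, w, hw, rfl⟩
        · exact ⟨[], h, a :: v, hv, rfl⟩
      · rintro ⟨x, hx, y, hy, hxy⟩
        rcases x with _ | ⟨b, u⟩
        · have hy' : y = a :: v := hxy
          subst hy'
          exact Or.inr hy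
        · injection hxy with h1 h2
          subst h1; subst h2
          exact Or.inl ⟨u, y, (ihP u).2 hx, hy, rfl⟩
    · next h =>
      rw [mem_langOf_odot]
      constructor
      · rintro ⟨u, w, hu, hw, rfl⟩
        exact ⟨a :: u, (ihP u).1 hu, w, hw, rfl⟩
      · rintro ⟨x, hx, y, hy, hxy⟩
        rcases x with _ | ⟨b, u⟩
        · exact absurd hx h
        · injection hxy with h1 h2
          subst h1; subst h2
          exact ⟨u, y, (ihP u).2 hx, hy, rfl⟩
  | star P ihP =>
    rw [show pd a (RegularExpression.star P) = odot (pd a P) (RegularExpression.star P)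
        from rfl, mem_langOf_odot, matches'_star, cons_mem_kstar]
    constructor
    · rintro ⟨u, w, hu, hw, rfl⟩
      exact ⟨u, w, (ihP u).1 hu, hw, rfl⟩
    · rintro ⟨u, w, hu, hw, rfl⟩
      exact ⟨u, w, (ihP u).2 hu, hw, rfl⟩

private lemma mem_langOf_foldl (w : List σ) :
    ∀ (S : Finset (RegularExpression σ)) (v : List σ),
      v ∈ langOf (w.foldl (fun S a => pdSet a S) S) ↔ ∃ β ∈ S, w ++ v ∈ β.matches' := by
  induction w with
  | nil => intro S v; rfl
  | cons a w ih =>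
    intro S v
    rw [List.foldl_cons, ih]
    simp only [pdSet, Finset.mem_biUnion]
    constructor
    · rintro ⟨β, ⟨γ, hγ, hβ⟩, hv⟩
      exact ⟨γ, hγ, (mem_langOf_pd a γ (w ++ v)).1 (mem_langOf.2 ⟨β, hβ, hv⟩)⟩
    · rintro ⟨γ, hγ, hv⟩
      obtain ⟨β, hβ, hv'⟩ := mem_langOf.1 ((mem_langOf_pd a γ (w ++ v)).2 hv)
      exact ⟨β, ⟨γ, hγ, hβ⟩, hv'⟩

private lemma mem_langOf_pdWord (α : RegularExpression σ) (w v : List σ) :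
    v ∈ langOf (pdWord α w) ↔ w ++ v ∈ α.matches' := by
  rw [pdWord, mem_langOf_foldl]
  simp

private lemma pdWord_append_singleton (α : RegularExpression σ) (u : List σ) (a : σ) :
    pdWord α (u ++ [a]) = pdSet a (pdWord α u) := by
  simp [pdWord, List.foldl_append]

private lemma pdNFA_evalFrom (α : RegularExpression σ) (w : List σ) :
    ∀ u : List σ,
      (pdNFA α).evalFrom {q : PD α | (q : RegularExpression σ) ∈ pdWord α u} w =
        {q : PD α | (q : RegularExpression σ) ∈ pdWord α (u ++ w)} := by
  induction w with
  | nil => intro u; simp [NFA.evalFrom]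
  | cons a w ih =>
    intro u
    have hstep : (pdNFA α).stepSet {q : PD α | (q : RegularExpression σ) ∈ pdWord α u} a =
        {q : PD α | (q : RegularExpression σ) ∈ pdWord α (u ++ [a])} := by
      ext p
      rw [NFA.mem_stepSet, pdWord_append_singleton]
      simp only [Set.mem_setOf_eq, pdSet, Finset.mem_biUnion]
      constructor
      · rintro ⟨q, hq, hp⟩
        exact ⟨(q : RegularExpression σ), hq, hp⟩
      · rintro ⟨β, hβ, hp⟩
        exact ⟨⟨β, u, hβ⟩, hβ, hp⟩
    have heval : (pdNFA α).evalFrom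
          {q : PD α | (q : RegularExpression σ) ∈ pdWord α u} (a :: w)
        = (pdNFA α).evalFrom
          {q : PD α | (q : RegularExpression σ) ∈ pdWord α (u ++ [a])} w := by
      rw [NFA.evalFrom, List.foldl_cons, hstep]; rfl
    rw [heval, ih (u ++ [a]), List.append_assoc]
    rfl

/-- Mirkin–Antimirov: the partial derivative automaton accepts exactly `L(α)`. -/
theorem pdNFA_accepts (α : RegularExpression σ) :
    (pdNFA α).accepts = α.matches' := by
  ext w
  rw [NFA.mem_accepts]
  have hstart : (pdNFA α).start = {q : PD α | (q : RegularExpression σ) ∈ pdWord α []} := by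
    ext q; simp [pdNFA, pdWord]
  rw [hstart, pdNFA_evalFrom α w []]
  simp only [List.nil_append]
  constructor
  · rintro ⟨q, hacc, hq⟩
    have := (mem_langOf_pdWord α w []).1 ⟨(q : RegularExpression σ), hq, hacc⟩
    simpa using this
  · intro hw
    obtain ⟨β, hβ, hnil⟩ := (mem_langOf_pdWord α w []).2 (by simpa using hw)
    exact ⟨⟨β, w, hβ⟩, hnil, hβ⟩
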